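/- arXiv:2512.22458 — 2 statements merged into one kernel-verified Lean document; each statement's English description precedes it below -/
import Mathlib

section
/- Let n ≥ 1 and ν, β ∈ ℝ. Suppose f : ℍⁿ → ℝ satisfies (λ/d_H(ξ,ζ))^ν · f(Φ_{ξ,λ}^β(ζ)) ≤ f(ζ) for every ξ ∈ ℍⁿ, every ζ ∈ Σ_λ(ξ) := ℍⁿ ∖ closure(B_λ(ξ)), and every λ > 0. Then f is constant. -/
open Complex Filter Topology MeasureTheory

noncomputable section

/-- The Heisenberg group ℍⁿ as ℂⁿ × ℝ. -/
abbrev Heis (n : ℕ) := (Fin n → ℂ) × ℝ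

namespace Heis

variable {n : ℕ}

/-- Hermitian inner product ⟨z,z'⟩ = Σ_j z_j conj(z'_j). -/
def hermInner (z w : Fin n → ℂ) : ℂ := ∑ j, z j * (starRingEnd ℂ) (w j)

/-- Squared Euclidean norm |z|² = Σ_j |z_j|². -/
def nsq (z : Fin n → ℂ) : ℝ := ∑ j, Complex.normSq (z j)

/-- Group law (z,t)·(z',t') = (z+z', t+t'+2 Im⟨z,z'⟩). -/
def hmul (a b : Heis n) : Heis n :=
  (a.1 + b.1, a.2 + b.2 + 2 * (hermInner a.1 b.1).im)

/-- Group inverse: ζ⁻¹ = −ζ. -/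
def hinv (a : Heis n) : Heis n := (-a.1, -a.2)

/-- Korányi norm |(z,t)|_H = (|z|⁴ + t²)^{1/4}. -/
def korNorm (a : Heis n) : ℝ := ((nsq a.1) ^ 2 + a.2 ^ 2) ^ ((1 : ℝ)/4)

/-- Korányi distance d_H(ξ,ζ) = |ζ⁻¹·ξ|_H. -/
def dH (a b : Heis n) : ℝ := korNorm (hmul (hinv b) a)

/-- Open Korányi ball B_λ(ξ). -/
def ball (ξ : Heis n) (lam : ℝ) : Set (Heis n) := {ζ | dH ξ ζ < lam}

/-- Left translation τ_ξ. -/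
def tau (ξ ζ : Heis n) : Heis n := hmul ξ ζ

/-- Dilation δ_λ(z,t) = (λz, λ²t). -/
def dil (lam : ℝ) (a : Heis n) : Heis n := (fun j => (lam : ℂ) * a.1 j, lam ^ 2 * a.2)

/-- Rotation ρ_M(z,t) = (Mz,t). -/
def rot (M : Matrix (Fin n) (Fin n) ℂ) (a : Heis n) : Heis n := (M.mulVec a.1, a.2)

/-- Inversion ι(z,t) = (conj z, −t). -/
def iota (a : Heis n) : Heis n := (fun j => (starRingEnd ℂ) (a.1 j), -a.2)

/-- w = t + i|z|². -/
def wC (a : Heis n) : ℂ := (a.2 : ℂ) + Complex.I * ((nsq a.1 : ℝ) : ℂ)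

/-- CR inversion 𝒥(z,t) = (z/w, −t/|w|²). -/
def crInv (a : Heis n) : Heis n :=
  (fun j => a.1 j / wC a, -a.2 / Complex.normSq (wC a))

/-- Angles θ_k for the rotation matrix M_{ξ,β}. -/
def theta (ξ : Heis n) (β : ℝ) (k : Fin n) : ℝ :=
  if ξ.1 k ≠ 0 then 2 * (ξ.1 k).arg + (wC ξ + Complex.I * (β : ℂ)).arg else 0

/-- The unitary diagonal matrix M_{ξ,β} = diag(e^{iθ₁},…,e^{iθₙ}). -/
def Mmat (ξ : Heis n) (β : ℝ) : Matrix (Fin n) (Fin n) ℂ :=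
  Matrix.diagonal fun k => Complex.exp (Complex.I * ((theta ξ β k : ℝ) : ℂ))

/-- Generalized CR inversion Φ_{ξ,λ}^β = τ_ξ ∘ ρ_{M_{ξ,β}} ∘ δ_{λ²} ∘ 𝒥 ∘ ι ∘ τ_ξ⁻¹. -/
def Phi (ξ : Heis n) (lam β : ℝ) (ζ : Heis n) : Heis n :=
  tau ξ (rot (Mmat ξ β) (dil (lam ^ 2) (crInv (iota (hmul (hinv ξ) ζ)))))

/-- Direction of the vector field X_j at p. -/
def XVec (j : Fin n) (p : Heis n) : Heis n := (Pi.single j (1 : ℂ), 2 * (p.1 j).im)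

/-- Direction of the vector field Y_j at p. -/
def YVec (j : Fin n) (p : Heis n) : Heis n := (Pi.single j Complex.I, -2 * (p.1 j).re)

/-- The vector field X_j acting on functions. -/
def Xop (j : Fin n) (u : Heis n → ℝ) (p : Heis n) : ℝ := fderiv ℝ u p (XVec j p)

/-- The vector field Y_j acting on functions. -/
def Yop (j : Fin n) (u : Heis n → ℝ) (p : Heis n) : ℝ := fderiv ℝ u p (YVec j p)

/-- Sub-Laplacian Δ_H = Σ_j (X_j² + Y_j²). -/
def subLap (u : Heis n → ℝ) (p : Heis n) : ℝ :=
  ∑ j, (Xop j (Xop j u) p + Yop j (Yop j u) p)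

/-- Squared length of the horizontal gradient |∇_H u|² = Σ_j ((X_j u)² + (Y_j u)²). -/
def gradHSq (u : Heis n → ℝ) (p : Heis n) : ℝ :=
  ∑ j, ((Xop j u p) ^ 2 + (Yop j u p) ^ 2)

/-- Generalized Kelvin transform u_{ξ,λ}^β(η) = (λ/d_H(η,ξ))^{Q−2} u(Φ_{ξ,λ}^β(η)), Q−2 = 2n. -/
def kelvin (u : Heis n → ℝ) (ξ : Heis n) (lam β : ℝ) (η : Heis n) : ℝ :=
  (lam / dH η ξ) ^ (2 * n) * u (Phi ξ lam β η)

/-- The filter |ζ|_H → ∞ on ℍⁿ. -/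
def atInftyH (n : ℕ) : Filter (Heis n) := Filter.comap korNorm Filter.atTop

end Heis

/-! On a vertical line `{z} × ℝ`, the inversion centred at `(z, t - s)` moves `(z, t)` to
`(z, t - s + λ⁴ / s)`; on a real line `ℝ v × {0}` with centre `c v`, `|c|` large, it is the
Euclidean inversion about `c v`. In both cases every point of the line is reached from every other
one by inversions whose ratio `λ / d_H` tends to `1` as the centre goes to infinity, so the
hypothesis yields `f (target) ≤ f (start)` in the limit. Thus `f` is constant on vertical lines
and on each line `ℝ z × {0}`, which contains `0`. -/

open scoped ComplexConjugate Real

lemma Real.sq_rpow_quarter {x : ℝ} (hx : 0 ≤ x) : (x ^ 2) ^ ((1 : ℝ) / 4) = √x := by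
  rw [Real.sqrt_eq_rpow, ← Real.rpow_natCast, ← Real.rpow_mul hx]
  norm_num

namespace Heis

variable {n : ℕ}

lemma korNorm_horizontal (w : Fin n → ℂ) : korNorm ((w, 0) : Heis n) = √(nsq w) := by
  unfold korNorm
  rw [zero_pow two_ne_zero, add_zero]
  exact Real.sq_rpow_quarter (Finset.sum_nonneg fun j _ => normSq_nonneg _)

lemma korNorm_vertical (s : ℝ) : korNorm ((0, s) : Heis n) = √|s| := by
  unfold korNorm nsq
  simp only [Pi.zero_apply, map_zero, Finset.sum_const_zero]
  rw [zero_pow two_ne_zero, zero_add, ← sq_abs, Real.sq_rpow_quarter (abs_nonneg s)]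

lemma continuous_dH (ξ : Heis n) : Continuous (dH ξ) := by
  unfold dH korNorm hmul hinv nsq hermInner
  refine Continuous.rpow_const ?_ fun _ => Or.inr (by norm_num)
  fun_prop

lemma notMem_closure_ball_of_lt_dH {ξ ζ : Heis n} {lam : ℝ} (h : lam < dH ξ ζ) :
    ζ ∉ closure (ball ξ lam) := fun hζ =>
  (closure_lt_subset_le (continuous_dH ξ) continuous_const hζ).not_gt h

lemma hermInner_zero_right (z : Fin n → ℂ) : hermInner z 0 = 0 := by
  simp [hermInner]

lemma im_hermInner_neg_self (z : Fin n → ℂ) : (hermInner (-z) z).im = 0 := by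
  simp [hermInner, Complex.mul_conj, Complex.im_sum]

lemma hinv_mul_vertical (z : Fin n → ℂ) (t s : ℝ) :
    hmul (hinv (z, t)) (z, t + s) = ((0, s) : Heis n) := by
  simp only [hmul, hinv, neg_add_cancel, im_hermInner_neg_self]
  ext <;> simp

lemma dH_vertical (z : Fin n → ℂ) (t s : ℝ) : dH ((z, t - s) : Heis n) (z, t) = √|s| := by
  have := hinv_mul_vertical z t (-s)
  rw [dH, ← sub_eq_add_neg] at *
  rw [this, korNorm_vertical, abs_neg]

lemma Phi_vertical (z : Fin n → ℂ) (t s lam β : ℝ) :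
    Phi ((z, t - s) : Heis n) lam β (z, t) = (z, t - s + lam ^ 4 / s) := by
  have hg : hmul (hinv ((z, t - s) : Heis n)) (z, t) = (0, s) := by
    simpa using hinv_mul_vertical z (t - s) s
  rw [Phi, hg]
  simp only [iota, crInv, wC, dil, rot, tau, hmul, nsq]
  ext <;> simp [← Pi.zero_def, hermInner_zero_right]
  ring

lemma nsq_pos {v : Fin n → ℂ} (hv : v ≠ 0) : 0 < nsq v := by
  obtain ⟨j, hj⟩ := Function.ne_iff.1 hv
  exact Finset.sum_pos' (fun j _ => normSq_nonneg _) ⟨j, Finset.mem_univ j, normSq_pos.2 hj⟩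

lemma nsq_real_smul (a : ℝ) (v : Fin n → ℂ) : nsq ((a : ℂ) • v) = a ^ 2 * nsq v := by
  simp [nsq, Finset.mul_sum, Complex.normSq_mul, sq]

lemma hermInner_real_smul (a b : ℝ) (v : Fin n → ℂ) :
    hermInner ((a : ℂ) • v) ((b : ℂ) • v) = ((a * b * nsq v : ℝ) : ℂ) := by
  simp only [hermInner, nsq, Pi.smul_apply, smul_eq_mul, map_mul, conj_ofReal, Finset.mul_sum]
  push_cast
  refine Finset.sum_congr rfl fun j _ => ?_
  rw [← Complex.mul_conj]
  ring

lemma hmul_real_smul (a b : ℝ) (v : Fin n → ℂ) :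
    hmul ((a : ℂ) • v, 0) ((b : ℂ) • v, 0) = ((((a + b : ℝ) : ℂ) • v, 0) : Heis n) := by
  ext j
  · simp [hmul, add_mul]
  · simp only [hmul, hermInner_real_smul, ofReal_im]
    ring

lemma hinv_mul_real_smul (a c : ℝ) (v : Fin n → ℂ) :
    hmul (hinv ((c : ℂ) • v, 0)) ((a : ℂ) • v, 0) = ((((a - c : ℝ) : ℂ) • v, 0) : Heis n) := by
  have : hinv (((c : ℂ) • v, 0) : Heis n) = (((-c : ℝ) : ℂ) • v, 0) := by
    simp [hinv]
  rw [this, hmul_real_smul, neg_add_eq_sub]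

lemma dH_real_smul (a c : ℝ) (v : Fin n → ℂ) :
    dH (((c : ℂ) • v, 0) : Heis n) ((a : ℂ) • v, 0) = |a - c| * √(nsq v) := by
  rw [dH, hinv_mul_real_smul, korNorm_horizontal, nsq_real_smul, Real.sqrt_mul (sq_nonneg _),
    Real.sqrt_sq_eq_abs, abs_sub_comm]

lemma _root_.Complex.exp_two_mul_arg_mul_I_mul_conj (w : ℂ) :
    exp (2 * arg w * I) * conj w = w := by
  have hw := norm_mul_exp_arg_mul_I w
  have hconj : conj (exp (arg w * I)) * exp (arg w * I) = 1 := by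
    rw [← exp_conj, ← exp_add]
    simp
  calc exp (2 * arg w * I) * conj w
      = ‖w‖ * exp (arg w * I) * (conj (exp (arg w * I)) * exp (arg w * I)) := by
        nth_rw 2 [← hw]
        rw [map_mul, conj_ofReal, two_mul, add_mul, exp_add]
        ring
    _ = w := by rw [hconj, mul_one, hw]

lemma exp_theta_mul_conj {ξ : Heis n} {β : ℝ} (harg : arg (wC ξ + I * β) = π / 2) (k : Fin n) :
    exp (I * (theta ξ β k : ℂ)) * conj (ξ.1 k) = I * ξ.1 k := by
  unfold theta
  split_ifs with hk
  · rw [harg, ofReal_add, ofReal_mul, mul_add, exp_add, mul_right_comm, mul_comm I,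
      mul_comm I, ofReal_div, ofReal_ofNat, exp_pi_div_two_mul_I,
      exp_two_mul_arg_mul_I_mul_conj, mul_comm]
  · simp [not_not.1 hk]

-- `hβ` puts the argument of `wC ξ + iβ` at `π / 2`, so the rotation `Mmat` undoes the
-- conjugation `iota` and `Phi` is the Euclidean inversion about `ξ` on the line `ℝ v`.
lemma Phi_real_smul {a c : ℝ} (v : Fin n → ℂ) (lam : ℝ) {β : ℝ} (hc : c ≠ 0)
    (hβ : 0 < c ^ 2 * nsq v + β) :
    Phi ((c : ℂ) • v, 0) lam β ((a : ℂ) • v, 0) =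
      ((((c + lam ^ 2 / ((a - c) * nsq v) : ℝ) : ℂ) • v, 0) : Heis n) := by
  have harg : arg (wC (((c : ℂ) • v, 0) : Heis n) + I * β) = π / 2 := by
    have : wC (((c : ℂ) • v, 0) : Heis n) + I * β = ((c ^ 2 * nsq v + β : ℝ) : ℂ) * I := by
      simp only [wC, nsq_real_smul]
      push_cast
      ring
    rw [this, arg_real_mul _ hβ, arg_I]
  have hrot (j : Fin n) : exp (I * (theta ((c : ℂ) • v, 0) β j : ℂ)) * conj (v j) = I * v j := by
    have := exp_theta_mul_conj harg j
    simp only [Pi.smul_apply, smul_eq_mul, map_mul, conj_ofReal] at this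
    refine mul_left_cancel₀ (ofReal_ne_zero.2 hc) ?_
    linear_combination this
  have hnsq : nsq (fun j => ((a - c : ℝ) : ℂ) * conj (v j)) = (a - c) ^ 2 * nsq v := by
    simp only [nsq, normSq_mul, normSq_ofReal, normSq_conj, Finset.mul_sum, sq]
  have hJ : rot (Mmat ((c : ℂ) • v, 0) β) (dil (lam ^ 2) (crInv (iota (((a - c : ℝ) : ℂ) • v, 0))))
      = ((((lam ^ 2 / ((a - c) * nsq v) : ℝ) : ℂ) • v, 0) : Heis n) := by
    simp only [iota, crInv, wC, dil, rot, Mmat, Pi.smul_apply, smul_eq_mul, map_mul,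
      conj_ofReal, hnsq, neg_zero, ofReal_zero, zero_add]
    ext j
    · dsimp only
      rw [Matrix.mulVec_diagonal, Pi.smul_apply, smul_eq_mul]
      calc _ = exp (I * (theta ((c : ℂ) • v, 0) β j : ℂ)) * conj (v j) *
            ((lam ^ 2 : ℝ) * (a - c : ℝ) / (I * ((a - c) ^ 2 * nsq v : ℝ))) := by ring
        _ = _ := by
          rw [hrot]
          push_cast
          field_simp
    · simp
  rw [Phi, hinv_mul_real_smul, hJ, tau, hmul_real_smul]

def KelvinDominated (ν β : ℝ) (f : Heis n → ℝ) : Prop :=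
  ∀ ξ : Heis n, ∀ lam : ℝ, 0 < lam → ∀ ζ ∉ closure (ball ξ lam),
    (lam / dH ξ ζ) ^ ν * f (Phi ξ lam β ζ) ≤ f ζ

namespace KelvinDominated

variable {ν β : ℝ} {f : Heis n → ℝ}

lemma le_of_eventually_Phi_eq (hf : KelvinDominated ν β f) {ζ η : Heis n}
    (hη : ∀ᶠ r in 𝓝[<] (1 : ℝ), ∃ ξ, 0 < dH ξ ζ ∧ Phi ξ (r * dH ξ ζ) β ζ = η) :
    f η ≤ f ζ := by
  have hlim : Tendsto (fun r : ℝ => r ^ ν * f η) (𝓝[<] 1) (𝓝 (f η)) := by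
    have := (Real.continuousAt_rpow_const 1 ν (Or.inl one_ne_zero)).tendsto
    simpa using (this.mono_left nhdsWithin_le_nhds).mul_const (f η)
  refine le_of_tendsto hlim ?_
  filter_upwards [hη, Ioo_mem_nhdsLT one_pos] with r ⟨ξ, hd, hΦ⟩ ⟨hr0, hr1⟩
  have hlt : r * dH ξ ζ < dH ξ ζ := mul_lt_of_lt_one_left hd hr1
  have := hf ξ _ (mul_pos hr0 hd) ζ (notMem_closure_ball_of_lt_dH hlt)
  rwa [mul_div_cancel_right₀ _ hd.ne', hΦ] at this

lemma apply_add_le (hf : KelvinDominated ν β f) (z : Fin n → ℂ) (t u : ℝ) :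
    f (z, t + u) ≤ f (z, t) := by
  rcases eq_or_ne u 0 with rfl | hu
  · rw [add_zero]
  refine hf.le_of_eventually_Phi_eq ?_
  filter_upwards [Ioo_mem_nhdsLT one_pos] with r ⟨hr0, hr1⟩
  have hr4 : 1 - r ^ 4 ≠ 0 := by
    have : r ^ 4 < 1 := pow_lt_one₀ hr0.le hr1 (by norm_num)
    linarith
  -- chosen so that `t - s + (r * √|s|) ^ 4 / s = t + u`
  set s := -u / (1 - r ^ 4)
  have hs : s ≠ 0 := div_ne_zero (neg_ne_zero.2 hu) hr4
  have hsu : s * (1 - r ^ 4) = -u := div_mul_cancel₀ _ hr4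
  refine ⟨(z, t - s), ?_, ?_⟩
  · rw [dH_vertical]
    exact Real.sqrt_pos.2 (abs_pos.2 hs)
  · rw [dH_vertical, Phi_vertical, mul_pow, show √|s| ^ 4 = s ^ 2 by
      rw [show 4 = 2 * 2 by rfl, pow_mul, Real.sq_sqrt (abs_nonneg s), sq_abs]]
    congr 1
    field_simp
    linear_combination -hsu

lemma apply_mk_eq (hf : KelvinDominated ν β f) (z : Fin n → ℂ) (t t' : ℝ) :
    f (z, t) = f (z, t') := by
  have h₁ := hf.apply_add_le z t (t' - t)
  have h₂ := hf.apply_add_le z t' (t - t')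
  rw [add_sub_cancel] at h₁ h₂
  exact le_antisymm h₂ h₁

lemma apply_real_smul_le_of_lt (hf : KelvinDominated ν β f) (v : Fin n → ℂ) {a b : ℝ}
    (hab : a < b) : f ((b : ℂ) • v, 0) ≤ f ((a : ℂ) • v, 0) := by
  rcases eq_or_ne v 0 with rfl | hv
  · simp
  have hN := nsq_pos hv
  -- the inversion of ratio `r` about `c r • v` sends `a • v` to `b • v`
  set c : ℝ → ℝ := fun r => a + (b - a) / (1 - r ^ 2)
  have hgap : Tendsto (fun r : ℝ => 1 - r ^ 2) (𝓝[<] 1) (𝓝[>] 0) := by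
    refine tendsto_nhdsWithin_iff.2 ⟨?_, ?_⟩
    · have : Tendsto (fun r : ℝ => 1 - r ^ 2) (𝓝 1) (𝓝 (1 - 1 ^ 2)) :=
        ((continuous_const.sub (continuous_pow 2)).tendsto 1)
      simpa using this.mono_left nhdsWithin_le_nhds
    · filter_upwards [Ioo_mem_nhdsLT one_pos] with r hr
      simp only [Set.mem_Ioi, sub_pos]
      nlinarith [hr.1, hr.2]
  have hc : Tendsto c (𝓝[<] 1) atTop :=
    tendsto_atTop_add_const_left _ a (hgap.inv_tendsto_nhdsGT_zero.const_mul_atTop (sub_pos.2 hab))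
  have hcβ : Tendsto (fun r => c r ^ 2 * nsq v + β) (𝓝[<] 1) atTop :=
    tendsto_atTop_add_const_right _ β
      (((tendsto_pow_atTop two_ne_zero).comp hc).atTop_mul_const hN)
  refine hf.le_of_eventually_Phi_eq ?_
  filter_upwards [hgap.eventually self_mem_nhdsWithin, hc.eventually_gt_atTop 0,
    hcβ.eventually_gt_atTop 0] with r hr hc0 hcβ
  have hcr : (c r - a) * (1 - r ^ 2) = b - a := by
    simp only [c, add_sub_cancel_left]
    exact div_mul_cancel₀ _ hr.ne'
  have hca : a - c r < 0 := by nlinarith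
  refine ⟨((c r : ℂ) • v, 0), ?_, ?_⟩
  · rw [dH_real_smul]
    exact mul_pos (abs_pos.2 hca.ne) (Real.sqrt_pos.2 hN)
  · rw [dH_real_smul, Phi_real_smul v _ hc0.ne' hcβ, mul_pow, mul_pow, sq_abs,
      Real.sq_sqrt hN.le]
    congr 3
    field_simp
    linear_combination hcr

lemma apply_real_smul_le (hf : KelvinDominated ν β f) (v : Fin n → ℂ) (a b : ℝ) :
    f ((b : ℂ) • v, 0) ≤ f ((a : ℂ) • v, 0) := by
  rcases lt_trichotomy a b with hab | rfl | hba
  · exact hf.apply_real_smul_le_of_lt v hab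
  · rfl
  · simpa using hf.apply_real_smul_le_of_lt (-v) (neg_lt_neg hba)

end KelvinDominated

end Heis

open Heis

theorem calculus_lemma_I_general (n : ℕ) (ν β : ℝ) (f : Heis n → ℝ)
    (h : ∀ ξ : Heis n, ∀ lam : ℝ, 0 < lam → ∀ ζ ∉ closure (ball ξ lam),
      (lam / dH ξ ζ) ^ ν * f (Phi ξ lam β ζ) ≤ f ζ) :
    ∃ c : ℝ, ∀ ζ : Heis n, f ζ = c := by
  have hf : KelvinDominated ν β f := h
  refine ⟨f (0, 0), fun ⟨z, t⟩ => ?_⟩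
  have hz : f (z, 0) = f (0, 0) := by
    simpa using le_antisymm (hf.apply_real_smul_le z 0 1) (hf.apply_real_smul_le z 1 0)
  rw [hf.apply_mk_eq z t 0, hz]

/-- Calculus Lemma I of Li–Nirenberg–Zhu type. -/
theorem calculus_lemma_I (n : ℕ) (hn : 1 ≤ n) (ν β : ℝ) (f : Heis n → ℝ)
    (h : ∀ ξ : Heis n, ∀ lam : ℝ, 0 < lam → ∀ ζ ∉ closure (ball ξ lam),
      (lam / dH ξ ζ) ^ ν * f (Phi ξ lam β ζ) ≤ f ζ) :
    ∃ c : ℝ, ∀ ζ : Heis n, f ζ = c :=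
  calculus_lemma_I_general n ν β f h
end
end

section
/- For any ξ ∈ ℍⁿ, λ > 0, β ∈ ℝ and any ζ ∈ ℍⁿ ∖ {ξ}, one has d_H(Φ_{ξ,λ}^β(ζ), ξ) · d_H(ζ, ξ) = λ². -/
open Complex Filter Topology MeasureTheory

noncomputable section

open Heis

/-! Left translation by ξ⁻¹ undoes τ_ξ, so everything reduces to the Korányi norm of ξ⁻¹·ζ.
The unitary rotation and ι preserve that norm and δ_μ scales it by |μ|, while 𝒥 inverts it, since
|t + i|z|²|² = |z|⁴ + t² is the fourth power of |(z,t)|_H. Hence d_H(Φ(ζ), ξ) = λ² / d_H(ζ, ξ). -/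

namespace Heis

variable {n : ℕ}

lemma hermInner_self_im (z : Fin n → ℂ) : (hermInner z z).im = 0 := by
  simp [hermInner, Complex.mul_conj, Complex.im_sum]

lemma hmul_zero (a : Heis n) : hmul a 0 = a := by
  simp [hmul, hermInner]

lemma hinv_hinv (a : Heis n) : hinv (hinv a) = a := by
  simp [hinv]

lemma hmul_hinv_hmul (ξ a : Heis n) : hmul (hinv ξ) (hmul ξ a) = a := by
  have hInner : hermInner (-ξ.1) (ξ.1 + a.1) = -hermInner ξ.1 ξ.1 - hermInner ξ.1 a.1 := by
    simp only [hermInner, Pi.neg_apply, Pi.add_apply, map_add, neg_mul, mul_add,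
      Finset.sum_add_distrib, Finset.sum_neg_distrib]
    ring
  ext1
  · simp [hmul, hinv]
  · simp only [hmul, hinv, hInner, Complex.sub_im, Complex.neg_im, hermInner_self_im]
    ring

lemma hmul_hmul_hinv (ξ a : Heis n) : hmul ξ (hmul (hinv ξ) a) = a := by
  simpa only [hinv_hinv] using hmul_hinv_hmul (hinv ξ) a

lemma nsq_nonneg (z : Fin n → ℂ) : 0 ≤ nsq z :=
  Finset.sum_nonneg fun j _ => Complex.normSq_nonneg (z j)

lemma nsq_eq_zero_iff {z : Fin n → ℂ} : nsq z = 0 ↔ z = 0 := by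
  rw [nsq, Finset.sum_eq_zero_iff_of_nonneg fun j _ => Complex.normSq_nonneg (z j)]
  simp [funext_iff]

lemma nsq_conj (z : Fin n → ℂ) : nsq (fun j => starRingEnd ℂ (z j)) = nsq z := by
  simp [nsq]

lemma nsq_mul_left (c : ℂ) (z : Fin n → ℂ) :
    nsq (fun j => c * z j) = Complex.normSq c * nsq z := by
  simp [nsq, Finset.mul_sum]

lemma nsq_div_right (z : Fin n → ℂ) (c : ℂ) :
    nsq (fun j => z j / c) = nsq z / Complex.normSq c := by
  simp [nsq, Finset.sum_div]

lemma nsq_diagonal_mulVec {d : Fin n → ℂ} (hd : ∀ k, Complex.normSq (d k) = 1)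
    (z : Fin n → ℂ) : nsq ((Matrix.diagonal d).mulVec z) = nsq z := by
  simp [nsq, Matrix.mulVec_diagonal, hd]

lemma normSq_wC (a : Heis n) : Complex.normSq (wC a) = nsq a.1 ^ 2 + a.2 ^ 2 := by
  rw [wC, mul_comm, Complex.normSq_add_mul_I]
  ring

lemma korNorm_nonneg (a : Heis n) : 0 ≤ korNorm a := by
  unfold korNorm
  have := nsq_nonneg a.1
  positivity

lemma korNorm_pow_four (a : Heis n) : korNorm a ^ 4 = nsq a.1 ^ 2 + a.2 ^ 2 := by
  have := nsq_nonneg a.1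
  simpa [korNorm] using Real.rpow_inv_natCast_pow (n := 4) (x := nsq a.1 ^ 2 + a.2 ^ 2)
    (by positivity) four_ne_zero

lemma korNorm_eq_iff {a : Heis n} {r : ℝ} (hr : 0 ≤ r) :
    korNorm a = r ↔ nsq a.1 ^ 2 + a.2 ^ 2 = r ^ 4 := by
  rw [← pow_left_inj₀ (korNorm_nonneg a) hr four_ne_zero, korNorm_pow_four]

lemma korNorm_eq_zero_iff {a : Heis n} : korNorm a = 0 ↔ a = 0 := by
  rw [korNorm_eq_iff le_rfl, zero_pow four_ne_zero, Prod.ext_iff, Prod.fst_zero,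
    Prod.snd_zero]
  have := nsq_nonneg a.1
  constructor
  · intro h
    exact ⟨nsq_eq_zero_iff.1 (by nlinarith), by nlinarith⟩
  · rintro ⟨h1, h2⟩
    simp [h1, h2, nsq]

lemma korNorm_rot_Mmat (ξ : Heis n) (β : ℝ) (a : Heis n) :
    korNorm (rot (Mmat ξ β) a) = korNorm a := by
  have hunit (θ : ℝ) : Complex.normSq (Complex.exp (Complex.I * θ)) = 1 := by
    rw [mul_comm, Complex.normSq_eq_norm_sq, Complex.norm_exp_ofReal_mul_I, one_pow]
  simp only [korNorm, rot, Mmat, nsq_diagonal_mulVec fun k => hunit _]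

lemma korNorm_iota (a : Heis n) : korNorm (iota a) = korNorm a := by
  simp [korNorm, iota, nsq_conj]

lemma korNorm_dil (μ : ℝ) (a : Heis n) : korNorm (dil μ a) = |μ| * korNorm a := by
  rw [korNorm_eq_iff (by positivity [korNorm_nonneg a]), mul_pow,
    korNorm_pow_four, dil, nsq_mul_left, Complex.normSq_ofReal,
    pow_abs, abs_of_nonneg (by positivity)]
  ring

lemma korNorm_crInv (a : Heis n) : korNorm (crInv a) = (korNorm a)⁻¹ := by
  rw [korNorm_eq_iff (inv_nonneg.2 (korNorm_nonneg a)), inv_pow,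
    korNorm_pow_four, crInv, nsq_div_right, normSq_wC]
  field_simp

lemma dH_ne_zero {ζ ξ : Heis n} (h : ζ ≠ ξ) : dH ζ ξ ≠ 0 := by
  rw [dH, Ne, korNorm_eq_zero_iff]
  intro h0
  apply h
  rw [← hmul_hmul_hinv ξ ζ, h0, hmul_zero]

lemma dH_Phi (ξ : Heis n) (lam β : ℝ) (ζ : Heis n) :
    dH (Phi ξ lam β ζ) ξ = lam ^ 2 / dH ζ ξ := by
  rw [dH, Phi, tau, hmul_hinv_hmul, korNorm_rot_Mmat, korNorm_dil, korNorm_crInv, korNorm_iota,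
    abs_of_nonneg (sq_nonneg lam), div_eq_mul_inv, dH]

end Heis

theorem phi_reflection_identity_general (n : ℕ) (ξ : Heis n) (lam : ℝ) (β : ℝ)
    (ζ : Heis n) (hζ : ζ ≠ ξ) :
    dH (Phi ξ lam β ζ) ξ * dH ζ ξ = lam ^ 2 := by
  rw [dH_Phi, div_mul_cancel₀ _ (dH_ne_zero hζ)]

/-- the reflection identity d_H(Φ_{ξ,λ}^β(ζ),ξ)·d_H(ζ,ξ) = λ². -/
theorem phi_reflection_identity (n : ℕ) (ξ : Heis n) (lam : ℝ) (hlam : 0 < lam) (β : ℝ)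
    (ζ : Heis n) (hζ : ζ ≠ ξ) :
    dH (Phi ξ lam β ζ) ξ * dH ζ ξ = lam ^ 2 :=
  phi_reflection_identity_general n ξ lam β ζ hζ
end
end
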